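/- Ind(UX) ≤ asInd(X) for every coarse proximity space (X,B,b), where UX is its boundary. -/

import Mathlib

open Set

universe u
variable {X : Type u}

/-- The axioms of a coarse proximity structure: a bornology `B` (contains singletons,
closed under subsets and finite unions) and a relation `b` satisfying symmetry,
unboundedness of related sets, relatedness of sets with unbounded intersection,
the union axiom, and the strong axiom. -/
structure IsCoarseProximity (B : Set (Set X)) (b : Set X → Set X → Prop) : Prop where
  singleton_mem : ∀ x : X, {x} ∈ B
  subset_mem : ∀ A C : Set X, A ∈ B → C ⊆ A → C ∈ B
  union_mem : ∀ A C : Set X, A ∈ B → C ∈ B → A ∪ C ∈ B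
  symm : ∀ A C : Set X, b A C → b C A
  unbounded_of_rel : ∀ A C : Set X, b A C → A ∉ B ∧ C ∉ B
  rel_of_inter : ∀ A C : Set X, A ∩ C ∉ B → b A C
  union_iff : ∀ A C D : Set X, b (A ∪ C) D ↔ b A D ∨ b C D
  strong : ∀ A C : Set X, ¬ b A C → ∃ E : Set X, ¬ b A E ∧ ¬ b (univ \ E) C

/-- A coarse proximity space structure on `X`. -/
structure CoarseProximity (X : Type u) where
  B : Set (Set X)
  b : Set X → Set X → Prop
  isCP : IsCoarseProximity B b

/-- The weak asymptotic resemblance induced by a coarse proximity. -/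
def phi (cp : CoarseProximity X) (A C : Set X) : Prop :=
  (∀ C' ⊆ C, C' ∉ cp.B → cp.b A C') ∧ (∀ A' ⊆ A, A' ∉ cp.B → cp.b A' C)

/-- The discrete extension of the coarse proximity `b`. -/
def deltaExt (cp : CoarseProximity X) (A C : Set X) : Prop :=
  (A ∩ C).Nonempty ∨ cp.b A C

/-- A cluster in the proximity space given by the discrete extension of `b`:
any two members are close, any set close to all members is a member, and a union
belongs only if one of the pieces does. -/
structure IsCluster (cp : CoarseProximity X) (σ : Set (Set X)) : Prop where
  close : ∀ A ∈ σ, ∀ C ∈ σ, deltaExt cp A C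
  mem_of_close : ∀ C : Set X, (∀ A ∈ σ, deltaExt cp C A) → C ∈ σ
  union_cases : ∀ A C : Set X, A ∪ C ∈ σ → A ∈ σ ∨ C ∈ σ

/-- The boundary `𝒰X` of the coarse proximity space: clusters (in the Smirnov
compactification of the discrete extension) containing no bounded set. -/
def UX (cp : CoarseProximity X) : Set (Set (Set X)) :=
  {σ | IsCluster cp σ ∧ ∀ A ∈ σ, A ∉ cp.B}

/-- The trace `A' = cl_𝔛(A) ∩ 𝒰X` of `A ⊆ X` in the boundary; a cluster of the
boundary lies in the closure of `A` in the Smirnov compactification iff `A` is a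
member of the cluster. -/
def trace (cp : CoarseProximity X) (A : Set X) : Set (Set (Set X)) :=
  {σ ∈ UX cp | A ∈ σ}

/-- Relative closure in a subspace `Y` of the Smirnov compactification: a cluster
`σ ∈ Y` lies in the closure of `S ⊆ Y` iff every subset of `X` absorbing `S`
(i.e. belonging to every cluster of `S`) belongs to `σ`. -/
def clRel (Y S : Set (Set (Set X))) : Set (Set (Set X)) :=
  {σ ∈ Y | ∀ C : Set X, (∀ τ ∈ S, C ∈ τ) → C ∈ σ}

/-- A subset of `Y` is relatively closed iff it contains its relative closure. -/
def relClosed (Y K : Set (Set (Set X))) : Prop :=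
  K ⊆ Y ∧ clRel Y K ⊆ K

/-- Interior in the boundary `𝒰X`. -/
def intU (cp : CoarseProximity X) (S : Set (Set (Set X))) : Set (Set (Set X)) :=
  UX cp \ clRel (UX cp) (UX cp \ S)

/-- Closed subsets of the boundary `𝒰X`. -/
def IsClosedU (cp : CoarseProximity X) (K : Set (Set (Set X))) : Prop :=
  relClosed (UX cp) K

/-- Open subsets of the boundary `𝒰X`. -/
def IsOpenU (cp : CoarseProximity X) (U : Set (Set (Set X))) : Prop :=
  U ⊆ UX cp ∧ IsClosedU cp (UX cp \ U)

/-- A `δ`-separator between `A` and `C` in the subspace `Y` of the boundary: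
disjoint relatively open `U, V` with `Y \ S = U ∪ V`, `A ⊆ U`, `C ⊆ V`. -/
def separatorIn (Y A C S : Set (Set (Set X))) : Prop :=
  ∃ U V : Set (Set (Set X)), U ⊆ Y ∧ V ⊆ Y ∧ Disjoint U V ∧ Y \ S = U ∪ V ∧
    A ⊆ U ∧ C ⊆ V ∧ relClosed Y (Y \ U) ∧ relClosed Y (Y \ V)

/-- Large inductive dimension (shifted by one): `IndLe 0 Y` means `Ind Y ≤ -1`
(i.e. `Y = ∅`) and `IndLe (n+1) Y` means `Ind Y ≤ n`: every pair of disjoint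
relatively closed sets admits a separator of dimension `≤ n - 1`. -/
def IndLe : ℕ → Set (Set (Set X)) → Prop
  | 0, Y => Y = ∅
  | n + 1, Y => ∀ A C : Set (Set (Set X)), relClosed Y A → relClosed Y C →
      Disjoint A C → ∃ S ⊆ Y, separatorIn Y A C S ∧ IndLe n S

/-- Asymptotic inductive dimension (shifted by one) of a subset `C ⊆ X` carrying
the subspace coarse proximity structure (whose boundary is identified with the
trace `C'`): `asIndRel cp 0 C` means `asInd C ≤ -1` (`C` bounded), and
`asIndRel cp (n+1) C` means `asInd C ≤ n`: for all `A, D ⊆ C` with `A b̄ D`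
there is an asymptotic separator `S ⊆ C` (i.e. `S'` separates `A'` from `D'`
in the boundary `C'` of the subspace) with `asInd S ≤ n - 1`. -/
def asIndRel (cp : CoarseProximity X) : ℕ → Set X → Prop
  | 0, C => C ∈ cp.B
  | n + 1, C => ∀ A D : Set X, A ⊆ C → D ⊆ C → ¬ cp.b A D →
      ∃ S ⊆ C, separatorIn (trace cp C) (trace cp A) (trace cp D) (trace cp S) ∧
        asIndRel cp n S

section Auxiliary

variable {cp : CoarseProximity X}

lemma b_mono_left {A A' D : Set X} (h : cp.b A D) (hs : A ⊆ A') : cp.b A' D := by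
  have h2 := (cp.isCP.union_iff A A' D).mpr (Or.inl h)
  rwa [union_eq_self_of_subset_left hs] at h2

lemma b_mono {A A' D D' : Set X} (h : cp.b A D) (hA : A ⊆ A') (hD : D ⊆ D') : cp.b A' D' :=
  cp.isCP.symm _ _ (b_mono_left (cp.isCP.symm _ _ (b_mono_left h hA)) hD)

lemma delta_symm {A C : Set X} (h : deltaExt cp A C) : deltaExt cp C A := by
  rcases h with h | h
  · exact Or.inl (by rwa [inter_comm])
  · exact Or.inr (cp.isCP.symm _ _ h)

lemma delta_mono {A A' C C' : Set X} (h : deltaExt cp A C) (hA : A ⊆ A') (hC : C ⊆ C') :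
    deltaExt cp A' C' := by
  rcases h with h | h
  · exact Or.inl (h.mono (inter_subset_inter hA hC))
  · exact Or.inr (b_mono h hA hC)

lemma delta_union_left {A B D : Set X} :
    deltaExt cp (A ∪ B) D ↔ deltaExt cp A D ∨ deltaExt cp B D := by
  unfold deltaExt
  rw [union_inter_distrib_right, union_nonempty, cp.isCP.union_iff]
  tauto

lemma not_b_of_empty_mem {D : Set X} (h0 : ∅ ∈ cp.B) : ¬ cp.b ∅ D := fun h =>
  (cp.isCP.unbounded_of_rel _ _ h).1 h0

lemma ef {A C : Set X} (h : ¬ deltaExt cp A C) :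
    ∃ E : Set X, ¬ deltaExt cp A E ∧ ¬ deltaExt cp (univ \ E) C := by
  rw [deltaExt, not_or] at h
  obtain ⟨hne, hb⟩ := h
  obtain ⟨E, hAE, hEC⟩ := cp.isCP.strong A C hb
  refine ⟨(E \ A) ∪ C, ?_, ?_⟩
  · rw [deltaExt, not_or]
    constructor
    · rw [not_nonempty_iff_eq_empty, eq_empty_iff_forall_notMem]
      rintro x ⟨hxA, hx | hxC⟩
      · exact hx.2 hxA
      · exact hne ⟨x, hxA, hxC⟩
    · intro hbb
      have hbb' := cp.isCP.symm _ _ hbb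
      rcases (cp.isCP.union_iff _ _ _).mp hbb' with h1 | h1
      · exact hAE (b_mono (cp.isCP.symm _ _ h1) (subset_refl A) diff_subset)
      · exact hb (cp.isCP.symm _ _ h1)
  · rw [deltaExt, not_or]
    constructor
    · rw [not_nonempty_iff_eq_empty, eq_empty_iff_forall_notMem]
      rintro x ⟨⟨-, hx⟩, hxC⟩
      exact hx (Or.inr hxC)
    · intro hbb
      have hsub : univ \ ((E \ A) ∪ C) ⊆ (univ \ E) ∪ A := by
        rintro x ⟨-, hx⟩
        by_cases hxA : x ∈ A
        · exact Or.inr hxA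
        · exact Or.inl ⟨trivial, fun hxE => hx (Or.inl ⟨hxE, hxA⟩)⟩
      have hbig := b_mono hbb hsub (subset_refl C)
      rcases (cp.isCP.union_iff _ _ _).mp hbig with h1 | h1
      · exact hEC h1
      · exact hb h1

lemma cluster_mem_mono {σ : Set (Set X)} (hσ : IsCluster cp σ) {A A' : Set X}
    (hA : A ∈ σ) (hs : A ⊆ A') : A' ∈ σ :=
  hσ.mem_of_close A' fun D hD => delta_mono (hσ.close A hA D hD) hs (subset_refl D)

lemma cluster_univ_mem {σ : Set (Set X)} (hσ : IsCluster cp σ) : (univ : Set X) ∈ σ :=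
  hσ.mem_of_close univ fun D hD =>
    delta_mono (hσ.close D hD D hD) (subset_univ D) (subset_refl D)

lemma cluster_compl_mem {σ : Set (Set X)} (hσ : IsCluster cp σ) {A : Set X}
    (hA : A ∉ σ) : univ \ A ∈ σ := by
  have hu : A ∪ (univ \ A) ∈ σ := by
    rw [union_diff_cancel (subset_univ A)]
    exact cluster_univ_mem hσ
  rcases hσ.union_cases _ _ hu with h | h
  · exact absurd h hA
  · exact h

lemma cluster_mem_of_compl_not_mem {σ : Set (Set X)} (hσ : IsCluster cp σ) {A : Set X}
    (hA : univ \ A ∉ σ) : A ∈ σ := by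
  by_contra h
  exact hA (cluster_compl_mem hσ h)

lemma cluster_empty_not_mem (h0 : ∅ ∈ cp.B) {σ : Set (Set X)} (hσ : IsCluster cp σ) :
    (∅ : Set X) ∉ σ := by
  intro h
  rcases hσ.close ∅ h ∅ h with h' | h'
  · simp at h'
  · exact (cp.isCP.unbounded_of_rel _ _ h').1 h0

lemma cluster_sUnion_finite (h0 : ∅ ∈ cp.B) {σ : Set (Set X)} (hσ : IsCluster cp σ)
    {s : Set (Set X)} (hs : s.Finite) (h : ⋃₀ s ∈ σ) : ∃ A ∈ s, A ∈ σ := by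
  revert h
  refine Set.Finite.induction_on (motive := fun s _ => ⋃₀ s ∈ σ → ∃ A ∈ s, A ∈ σ) s hs ?_ ?_
  · intro h
    rw [sUnion_empty] at h
    exact absurd h (cluster_empty_not_mem h0 hσ)
  · intro a t _ _ ih h
    rw [sUnion_insert] at h
    rcases hσ.union_cases _ _ h with h1 | h1
    · exact ⟨a, mem_insert _ _, h1⟩
    · obtain ⟨A, hA, hA2⟩ := ih h1
      exact ⟨A, mem_insert_of_mem _ hA, hA2⟩

lemma b_sUnion_finite (h0 : ∅ ∈ cp.B) {D : Set X} {s : Set (Set X)} (hs : s.Finite)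
    (h : cp.b (⋃₀ s) D) : ∃ A ∈ s, cp.b A D := by
  revert h
  refine Set.Finite.induction_on (motive := fun s _ => cp.b (⋃₀ s) D → ∃ A ∈ s, cp.b A D) s hs ?_ ?_
  · intro h
    rw [sUnion_empty] at h
    exact absurd h (not_b_of_empty_mem h0)
  · intro a t _ _ ih h
    rw [sUnion_insert] at h
    rcases (cp.isCP.union_iff _ _ _).mp h with h1 | h1
    · exact ⟨a, mem_insert _ _, h1⟩
    · obtain ⟨A, hA, hA2⟩ := ih h1
      exact ⟨A, mem_insert_of_mem _ hA, hA2⟩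

lemma uCluster_isCluster (U : Ultrafilter X) :
    IsCluster cp {D : Set X | ∀ B ∈ U, deltaExt cp D B} := by
  constructor
  · intro A hA C hC
    by_contra hn
    obtain ⟨E, h1, h2⟩ := ef hn
    rcases U.mem_or_compl_mem E with hE | hE
    · exact h1 (hA E hE)
    · have h3 := delta_symm (hC Eᶜ hE)
      rw [compl_eq_univ_diff] at h3
      exact h2 h3
  · intro C hC B hB
    refine hC B ?_
    intro B' hB'
    exact Or.inl (Ultrafilter.nonempty_of_mem (Filter.inter_mem hB hB'))
  · intro A C h
    by_contra hn
    push_neg at hn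
    obtain ⟨hA, hC⟩ := hn
    simp only [mem_setOf_eq, not_forall] at hA hC
    obtain ⟨B₁, hB₁, hAB₁⟩ := hA
    obtain ⟨B₂, hB₂, hCB₂⟩ := hC
    have hB : B₁ ∩ B₂ ∈ U := Filter.inter_mem hB₁ hB₂
    have hδ := h (B₁ ∩ B₂) hB
    rcases delta_union_left.mp hδ with h' | h'
    · exact hAB₁ (delta_mono h' (subset_refl A) inter_subset_left)
    · exact hCB₂ (delta_mono h' (subset_refl C) inter_subset_right)

lemma exists_cluster_of_finite (h0 : ∅ ∈ cp.B) (F : Set (Set X))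
    (h : ∀ F₀ ⊆ F, F₀.Finite → ∃ σ, IsCluster cp σ ∧ F₀ ⊆ σ) :
    ∃ σ, IsCluster cp σ ∧ F ⊆ σ := by
  rcases isEmpty_or_nonempty X with hX | hX
  · obtain ⟨σ, hσ, -⟩ := h ∅ (empty_subset _) finite_empty
    exfalso
    have hu := cluster_univ_mem hσ
    rcases hσ.close univ hu univ hu with hne | hb
    · obtain ⟨x, -⟩ := hne
      exact hX.false x
    · refine (cp.isCP.unbounded_of_rel _ _ hb).1 ?_
      have he : (univ : Set X) = ∅ := Set.eq_empty_of_isEmpty _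
      rw [he]; exact h0
  · set G : Set (Set X) := {S | ∃ A ∈ F, ∃ B : Set X, ¬ deltaExt cp A B ∧ S = Bᶜ} with hG
    have hfip : ∀ t, t ⊆ G → t.Finite → (⋂₀ t).Nonempty := by
      intro t ht htf
      have hch : ∀ S ∈ t, ∃ A, A ∈ F ∧ ∃ B : Set X, ¬ deltaExt cp A B ∧ S = Bᶜ := by
        intro S hS
        obtain ⟨A, hA, B, hnB, hSB⟩ := ht hS
        exact ⟨A, hA, B, hnB, hSB⟩
      choose! fA hfA fB hfB hfeq using hch
      obtain ⟨σ, hσ, hσA⟩ := h (fA '' t) (by rintro - ⟨S, hS, rfl⟩; exact hfA S hS)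
        (htf.image _)
      by_contra hemp
      rw [not_nonempty_iff_eq_empty] at hemp
      have hu : ⋃₀ (fB '' t) ∈ σ := by
        have huniv : (univ : Set X) = ⋃₀ (fB '' t) := by
          ext x
          simp only [mem_univ, true_iff, mem_sUnion, mem_image]
          have hx : x ∉ ⋂₀ t := by rw [hemp]; exact notMem_empty x
          rw [mem_sInter] at hx
          push_neg at hx
          obtain ⟨S, hS, hxS⟩ := hx
          refine ⟨fB S, ⟨S, hS, rfl⟩, ?_⟩
          rw [hfeq S hS] at hxS
          simpa using hxS
        rw [← huniv]
        exact cluster_univ_mem hσ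
      obtain ⟨-, ⟨S, hS, rfl⟩, hmem⟩ := cluster_sUnion_finite h0 hσ (htf.image _) hu
      exact (hfB S hS) (hσ.close (fA S) (hσA ⟨S, hS, rfl⟩) (fB S) hmem)
    have hne : (Filter.generate G).NeBot := Filter.generate_neBot_iff.mpr hfip
    obtain ⟨U, hU⟩ := Ultrafilter.exists_le (Filter.generate G)
    refine ⟨{D : Set X | ∀ B ∈ U, deltaExt cp D B}, uCluster_isCluster U, ?_⟩
    intro A hA B hB
    by_contra hn
    have hBc : Bᶜ ∈ U := hU (Filter.mem_generate_of_mem ⟨A, hA, B, hn, rfl⟩)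
    have hint := Ultrafilter.nonempty_of_mem (Filter.inter_mem hB hBc)
    simp at hint

lemma mem_UX_of {σ : Set (Set X)} (hσ : IsCluster cp σ)
    (h : ∀ D ∈ cp.B, univ \ D ∈ σ) : σ ∈ UX cp := by
  refine ⟨hσ, fun A hA hAB => ?_⟩
  rcases hσ.close A hA _ (h A hAB) with hne | hb
  · obtain ⟨x, hx1, -, hx2⟩ := hne
    exact hx2 hx1
  · exact (cp.isCP.unbounded_of_rel _ _ hb).1 hAB

lemma compl_bounded_mem {σ : Set (Set X)} (hσu : σ ∈ UX cp) {D : Set X}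
    (hD : D ∈ cp.B) : univ \ D ∈ σ :=
  cluster_compl_mem hσu.1 fun h => hσu.2 D h hD

def famOf (cp : CoarseProximity X) (K : Set (Set (Set X))) : Set (Set X) :=
  {A | ∀ τ ∈ K, A ∈ τ} ∪ {S | ∃ D ∈ cp.B, S = univ \ D}

lemma famOf_subset {C : Set X} {K : Set (Set (Set X))} (hKY : K ⊆ trace cp C)
    {σ : Set (Set X)} (hσK : σ ∈ K) : famOf cp K ⊆ σ := by
  rintro A (hA | ⟨D, hD, rfl⟩)
  · exact hA σ hσK
  · exact compl_bounded_mem (hKY hσK).1 hD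

lemma mem_of_famOf_subset {C : Set X} {K : Set (Set (Set X))}
    (hK : relClosed (trace cp C) K) {σ : Set (Set X)} (hσ : IsCluster cp σ)
    (hs : famOf cp K ⊆ σ) : σ ∈ K := by
  have hUX : σ ∈ UX cp := mem_UX_of hσ fun D hD => hs (Or.inr ⟨D, hD, rfl⟩)
  have hC : C ∈ σ := hs (Or.inl fun τ hτ => (hK.1 hτ).2)
  exact hK.2 ⟨⟨hUX, hC⟩, fun C' h' => hs (Or.inl h')⟩

lemma swelling {C : Set X} {K L : Set (Set (Set X))}
    (hK : relClosed (trace cp C) K) (hL : relClosed (trace cp C) L)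
    (hd : Disjoint K L) :
    ∃ P Q : Set X, P ⊆ C ∧ Q ⊆ C ∧ ¬ cp.b P Q ∧ K ⊆ trace cp P ∧ L ⊆ trace cp Q := by
  by_cases h0 : ∅ ∈ cp.B
  · have step1 : ∀ σ ∈ K, ∃ P G H Q : Set X,
        P ∈ σ ∧ ¬ deltaExt cp P G ∧ ¬ deltaExt cp (univ \ G) H ∧
        ¬ deltaExt cp (univ \ H) Q ∧ ∀ τ ∈ L, Q ∈ τ := by
      intro σ hσK
      have hσY := hK.1 hσK
      have hσcl : IsCluster cp σ := hσY.1.1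
      have hσL : σ ∉ L := fun hσL => (Set.disjoint_left.mp hd hσK) hσL
      have hnsub : ¬ famOf cp L ⊆ σ := fun hsub => hσL (mem_of_famOf_subset hL hσcl hsub)
      obtain ⟨A, hAF, hAσ⟩ := not_subset.mp hnsub
      have hAL : ∀ τ ∈ L, A ∈ τ := by
        rcases hAF with hA | ⟨D, hD, rfl⟩
        · exact hA
        · exact fun τ hτ => compl_bounded_mem (hL.1 hτ).1 hD
      have hnall : ¬ ∀ D ∈ σ, deltaExt cp A D := fun hall =>
        hAσ (hσcl.mem_of_close A hall)
      push_neg at hnall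
      obtain ⟨P, hPσ, hPA⟩ := hnall
      have hPA' : ¬ deltaExt cp P A := fun hh => hPA (delta_symm hh)
      obtain ⟨Q, hPQ, hQA⟩ := ef hPA'
      have hQL : ∀ τ ∈ L, Q ∈ τ := by
        intro τ hτ
        have hτcl : IsCluster cp τ := (hL.1 hτ).1.1
        refine cluster_mem_of_compl_not_mem hτcl fun hmem => ?_
        exact hQA (hτcl.close _ hmem A (hAL τ hτ))
      obtain ⟨G, hPG, hGQ⟩ := ef hPQ
      obtain ⟨H, hGH, hHQ⟩ := ef hGQ
      exact ⟨P, G, H, Q, hPσ, hPG, hGH, hHQ, hQL⟩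
    choose! fP fG fH fQ h1 h2 h3 h4 h5 using step1
    have hno : ¬ ∃ σ, IsCluster cp σ ∧ (famOf cp K ∪ (fG '' K)) ⊆ σ := by
      rintro ⟨σ, hσ, hsub⟩
      have hσK : σ ∈ K :=
        mem_of_famOf_subset hK hσ (fun x hx => hsub (Or.inl hx))
      have hG : fG σ ∈ σ := hsub (Or.inr ⟨σ, hσK, rfl⟩)
      exact h2 σ hσK (hσ.close _ (h1 σ hσK) _ hG)
    have hfin : ¬ ∀ F₀ ⊆ (famOf cp K ∪ (fG '' K)), F₀.Finite →
        ∃ σ, IsCluster cp σ ∧ F₀ ⊆ σ :=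
      fun hall => hno (exists_cluster_of_finite h0 _ hall)
    push_neg at hfin
    obtain ⟨F₀, hF₀sub, hF₀fin, hF₀no⟩ := hfin
    have hpre : ∀ a ∈ F₀ ∩ (fG '' K), ∃ σ, σ ∈ K ∧ fG σ = a := by
      rintro a ⟨-, σ, hσ, rfl⟩
      exact ⟨σ, hσ, rfl⟩
    choose! fσ hfσK hfσeq using hpre
    set T : Set (Set (Set X)) := fσ '' (F₀ ∩ (fG '' K)) with hT
    have hTK : T ⊆ K := by
      rintro - ⟨a, ha, rfl⟩
      exact hfσK a ha
    have hTfin : T.Finite := (hF₀fin.inter_of_left _).image _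
    have hcover : ∀ τ ∈ K, ∃ σ ∈ T, fG σ ∉ τ := by
      intro τ hτK
      by_contra hc
      push_neg at hc
      have hτcl : IsCluster cp τ := (hK.1 hτK).1.1
      refine hF₀no τ hτcl fun a ha => ?_
      rcases hF₀sub ha with haf | haG
      · exact famOf_subset hK.1 hτK haf
      · have haI : a ∈ F₀ ∩ (fG '' K) := ⟨ha, haG⟩
        have hmem := hc (fσ a) (mem_image_of_mem _ haI)
        rwa [hfσeq a haI] at hmem
    refine ⟨⋃₀ ((fun σ => C \ fG σ) '' T), C ∩ ⋂₀ (fH '' T), ?_, inter_subset_left,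
      ?_, ?_, ?_⟩
    · apply sUnion_subset
      rintro - ⟨σ, -, rfl⟩
      exact diff_subset
    · intro hb
      obtain ⟨-, ⟨σ, hσT, rfl⟩, hbe⟩ := b_sUnion_finite h0 (hTfin.image _) hb
      have hQH : C ∩ ⋂₀ (fH '' T) ⊆ fH σ := fun x hx =>
        (mem_sInter.mp hx.2) _ (mem_image_of_mem _ hσT)
      have hfinal := b_mono hbe (diff_subset_diff_left (subset_univ C)) hQH
      exact h3 σ (hTK hσT) (Or.inr hfinal)
    · intro τ hτK
      obtain ⟨σ, hσT, hGτ⟩ := hcover τ hτK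
      have hτY := hK.1 hτK
      have hτcl : IsCluster cp τ := hτY.1.1
      have hCτ : C ∈ τ := hτY.2
      have hsplit : (C ∩ fG σ) ∪ (C \ fG σ) ∈ τ := by
        rw [inter_union_diff]; exact hCτ
      have hPd : C \ fG σ ∈ τ := by
        rcases hτcl.union_cases _ _ hsplit with h' | h'
        · exact absurd (cluster_mem_mono hτcl h' inter_subset_right) hGτ
        · exact h'
      exact ⟨hτY.1, cluster_mem_mono hτcl hPd (subset_sUnion_of_mem ⟨σ, hσT, rfl⟩)⟩
    · intro τ hτL
      have hτY := hL.1 hτL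
      have hτcl : IsCluster cp τ := hτY.1.1
      have hCτ : C ∈ τ := hτY.2
      have hsplit : (C ∩ ⋂₀ (fH '' T)) ∪ (C \ ⋂₀ (fH '' T)) ∈ τ := by
        rw [inter_union_diff]; exact hCτ
      rcases hτcl.union_cases _ _ hsplit with h' | h'
      · exact ⟨hτY.1, h'⟩
      · exfalso
        have hdiff : C \ ⋂₀ (fH '' T) = ⋃₀ ((fun σ => C \ fH σ) '' T) := by
          ext x
          simp only [mem_diff, mem_sInter, mem_sUnion, mem_image]
          constructor
          · rintro ⟨hxC, hx⟩
            push_neg at hx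
            obtain ⟨-, ⟨σ, hσT, rfl⟩, hxH⟩ := hx
            exact ⟨C \ fH σ, ⟨σ, hσT, rfl⟩, hxC, hxH⟩
          · rintro ⟨-, ⟨σ, hσT, rfl⟩, hxC, hxH⟩
            refine ⟨hxC, fun hall => hxH (hall _ (mem_image_of_mem _ hσT))⟩
        rw [hdiff] at h'
        obtain ⟨-, ⟨σ, hσT, rfl⟩, hmem⟩ :=
          cluster_sUnion_finite h0 hτcl (hTfin.image _) h'
        have hcm : univ \ fH σ ∈ τ :=
          cluster_mem_mono hτcl hmem (diff_subset_diff_left (subset_univ C))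
        exact h4 σ (hTK hσT) (hτcl.close _ hcm _ (h5 σ (hTK hσT) τ hτL))
  · have hXe : IsEmpty X :=
      ⟨fun x => h0 (cp.isCP.subset_mem {x} ∅ (cp.isCP.singleton_mem x) (empty_subset _))⟩
    have hall : ∀ A : Set X, A = ∅ := fun A => Set.eq_empty_of_isEmpty A
    by_cases hbb : cp.b ∅ ∅
    · exfalso
      have hcl : IsCluster cp {(∅ : Set X)} := by
        constructor
        · intro A hA C' hC'
          rw [mem_singleton_iff] at hA hC'
          rw [hA, hC']
          exact Or.inr hbb
        · intro C' _
          rw [mem_singleton_iff]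
          exact hall C'
        · intro A C' _
          left
          rw [mem_singleton_iff]
          exact hall A
      have hU : ({(∅ : Set X)} : Set (Set X)) ∈ UX cp := by
        refine ⟨hcl, ?_⟩
        intro A hA
        rw [mem_singleton_iff] at hA
        rw [hA]
        exact h0
      have hY : ({(∅ : Set X)} : Set (Set X)) ∈ trace cp C :=
        ⟨hU, mem_singleton_iff.mpr (hall C)⟩
      have hKmem : ({(∅ : Set X)} : Set (Set X)) ∈ K :=
        hK.2 ⟨hY, fun C' _ => mem_singleton_iff.mpr (hall C')⟩
      have hLmem : ({(∅ : Set X)} : Set (Set X)) ∈ L :=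
        hL.2 ⟨hY, fun C' _ => mem_singleton_iff.mpr (hall C')⟩
      exact (Set.disjoint_left.mp hd hKmem) hLmem
    · refine ⟨∅, ∅, empty_subset _, empty_subset _, hbb, ?_, ?_⟩
      · intro σ hσK
        exfalso
        have hσcl : IsCluster cp σ := (hK.1 hσK).1.1
        have hu := cluster_univ_mem hσcl
        rcases hσcl.close univ hu univ hu with hne | hb
        · obtain ⟨x, -⟩ := hne
          exact hXe.false x
        · rw [hall univ] at hb
          exact hbb hb
      · intro σ hσL
        exfalso
        have hσcl : IsCluster cp σ := (hL.1 hσL).1.1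
        have hu := cluster_univ_mem hσcl
        rcases hσcl.close univ hu univ hu with hne | hb
        · obtain ⟨x, -⟩ := hne
          exact hXe.false x
        · rw [hall univ] at hb
          exact hbb hb

lemma trace_mono {A A' : Set X} (h : A ⊆ A') : trace cp A ⊆ trace cp A' :=
  fun _σ hσ => ⟨hσ.1, cluster_mem_mono hσ.1.1 hσ.2 h⟩

lemma trace_univ (cp : CoarseProximity X) : trace cp univ = UX cp := by
  ext σ
  exact ⟨fun h => h.1, fun h => ⟨h, cluster_univ_mem h.1⟩⟩

lemma trace_of_bounded {C : Set X} (hC : C ∈ cp.B) : trace cp C = ∅ := by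
  ext σ
  simp only [trace, mem_sep_iff, mem_empty_iff_false, iff_false, not_and]
  exact fun hU hC' => hU.2 C hC' hC

lemma asInd_to_Ind (cp : CoarseProximity X) :
    ∀ n, ∀ C : Set X, asIndRel cp n C → IndLe n (trace cp C) := by
  intro n
  induction n with
  | zero =>
      intro C hC
      rw [asIndRel] at hC
      rw [IndLe]
      exact trace_of_bounded hC
  | succ n ih =>
      intro C hC
      rw [asIndRel] at hC
      rw [IndLe]
      intro A₁ C₁ hA₁ hC₁ hd
      obtain ⟨P, Q, hPC, hQC, hb, hKP, hLQ⟩ := swelling hA₁ hC₁ hd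
      obtain ⟨S, hSC, hsep, hrec⟩ := hC P Q hPC hQC hb
      obtain ⟨U, V, hUY, hVY, hUV, heq, hPU, hQV, hcU, hcV⟩ := hsep
      exact ⟨trace cp S, trace_mono hSC, ⟨U, V, hUY, hVY, hUV, heq,
        hKP.trans hPU, hLQ.trans hQV, hcU, hcV⟩, ih S hrec⟩

end Auxiliary

/-- `Ind(𝒰X) ≤ asInd(X)` for every coarse proximity space: if the
asymptotic inductive dimension of `X` is at most `n - 1` (level `n` of the shifted
definition, `X` carrying its full structure, i.e. the subspace `univ`), then the
large inductive dimension of the boundary `𝒰X` is at most `n - 1`. -/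
theorem Ind_boundary_le_asInd (cp : CoarseProximity X) (n : ℕ)
    (h : asIndRel cp n Set.univ) : IndLe n (UX cp) := by
  have hmain := asInd_to_Ind cp n Set.univ h
  rwa [trace_univ] at hmain
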